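/- Let X = (X_1, ..., X_n) be a sequence of independent (not necessarily identically distributed) real random variables satisfying E[X_i] = E[X_i^3] = 0 and E[X_i^4] ≤ 9·E[X_i^2]^2. Let f be an n-variate multilinear polynomial of degree at most k. Then E[f(X)^4] ≤ 9^k · (E[f(X)^2])^2. -/

import Mathlib

open MeasureTheory ProbabilityTheory Finset
open scoped ENNReal

set_option linter.unusedSectionVars false
set_option maxHeartbeats 1000000

section Helpers

variable {Ω : Type*} [MeasurableSpace Ω] {μ : Measure Ω} [IsProbabilityMeasure μ]

private lemma ennr_half : (1:ℝ≥0∞)/2 = 1/4 + 1/4 := by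
  simp only [one_div]
  rw [← two_mul, show (4:ℝ≥0∞) = 2*2 by norm_num,
    ENNReal.mul_inv (by norm_num) (by norm_num), ← mul_assoc,
    ENNReal.mul_inv_cancel (by norm_num) (by norm_num), one_mul]

private lemma ennr_one : (1:ℝ≥0∞)/1 = 1/2 + 1/2 := by
  simp only [one_div, inv_one]
  exact ENNReal.inv_two_add_inv_two.symm

lemma memLp4_iff {f : Ω → ℝ} (hf : AEStronglyMeasurable f μ) :
    MemLp f 4 μ ↔ Integrable (fun ω => (f ω)^4) μ := by
  rw [← memLp_one_iff_integrable]
  have h := memLp_norm_rpow_iff (p := 4) (q := 4) hf (by norm_num) (by norm_num)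
  rw [ENNReal.div_self (by norm_num) (by norm_num)] at h
  rw [← h]
  have : (fun x => ‖f x‖ ^ (4:ℝ≥0∞).toReal) = fun ω => (f ω)^4 := by
    funext x
    have h4 : (4:ℝ≥0∞).toReal = ((4:ℕ):ℝ) := by norm_num
    rw [h4, Real.rpow_natCast, Real.norm_eq_abs, ← abs_pow, abs_of_nonneg (by positivity)]
  rw [this]

lemma intpow4 {f : Ω → ℝ} (hf : MemLp f 4 μ) : Integrable (fun ω => (f ω)^4) μ :=
  (memLp4_iff hf.1).mp hf

lemma memLp2_mul {f g : Ω → ℝ} (hf : MemLp f 4 μ) (hg : MemLp g 4 μ) :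
    MemLp (fun ω => f ω * g ω) 2 μ := by
  exact (by simpa [smul_eq_mul] using hg.smul hf (hpqr := ⟨by simpa only [one_div] using ennr_half.symm⟩) : MemLp (f * g) 2 μ)

lemma int_mul2 {f g : Ω → ℝ} (hf : MemLp f 2 μ) (hg : MemLp g 2 μ) :
    Integrable (fun ω => f ω * g ω) μ := by
  rw [← memLp_one_iff_integrable]
  exact (by simpa [smul_eq_mul] using hg.smul hf (hpqr := ⟨by simpa only [one_div] using ennr_one.symm⟩) : MemLp (f * g) 1 μ)

lemma int_mul4 {f g h k : Ω → ℝ} (hf : MemLp f 4 μ) (hg : MemLp g 4 μ)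
    (hh : MemLp h 4 μ) (hk : MemLp k 4 μ) :
    Integrable (fun ω => f ω * g ω * (h ω * k ω)) μ :=
  int_mul2 (memLp2_mul hf hg) (memLp2_mul hh hk)

private lemma h24 : (2:ℝ≥0∞) ≤ 4 := by norm_num
private lemma h14 : (1:ℝ≥0∞) ≤ 4 := by norm_num

lemma intpow2 {f : Ω → ℝ} (hf : MemLp f 4 μ) : Integrable (fun ω => (f ω)^2) μ := by
  have h := int_mul2 (hf.mono_exponent h24) (hf.mono_exponent h24)
  exact h.congr (Filter.Eventually.of_forall fun ω => by ring)

lemma intpow3 {f : Ω → ℝ} (hf : MemLp f 4 μ) : Integrable (fun ω => (f ω)^3) μ := by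
  have h := int_mul2 (memLp2_mul hf hf) (hf.mono_exponent h24)
  exact h.congr (Filter.Eventually.of_forall fun ω => by ring)

lemma memLp4_mul_indep {f g : Ω → ℝ} (hfg : IndepFun f g μ)
    (hf : MemLp f 4 μ) (hg : MemLp g 4 μ) : MemLp (fun ω => f ω * g ω) 4 μ := by
  rw [memLp4_iff (f := fun ω => f ω * g ω) (hf.1.mul hg.1)]
  have hind : IndepFun (fun ω => (f ω)^4) (fun ω => (g ω)^4) μ :=
    hfg.comp (measurable_id.pow_const 4) (measurable_id.pow_const 4)
  have := hind.integrable_mul (intpow4 hf) (intpow4 hg)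
  exact this.congr (Filter.Eventually.of_forall fun ω => by simp [Pi.mul_apply]; ring)

end Helpers

noncomputable section MainSec

variable {Ω : Type*} [MeasurableSpace Ω] {μ : Measure Ω} [IsProbabilityMeasure μ] {n : ℕ}

/-- A multilinear polynomial with variables in `A`, as a function of the restricted tuple. -/
def polyFn (A : Finset (Fin n)) (c : Finset (Fin n) → ℝ) :
    ({ x // x ∈ A } → ℝ) → ℝ :=
  fun v => ∑ S ∈ A.powerset, c S * ∏ i ∈ A.attach, if (i : Fin n) ∈ S then v i else 1

lemma polyFn_meas (A : Finset (Fin n)) (c : Finset (Fin n) → ℝ) :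
    Measurable (polyFn A c) := by
  apply Finset.measurable_sum
  intro S _
  apply Measurable.const_mul
  apply Finset.measurable_prod
  intro i _
  by_cases h : (i : Fin n) ∈ S
  · simpa [h] using measurable_pi_apply i
  · simp [h]

lemma polyFn_apply {X : Fin n → Ω → ℝ} (A : Finset (Fin n)) (c : Finset (Fin n) → ℝ) (ω : Ω) :
    polyFn A c (fun i : { x // x ∈ A } => X i ω)
      = ∑ S ∈ A.powerset, c S * ∏ i ∈ S, X i ω := by
  unfold polyFn
  refine Finset.sum_congr rfl fun S hS => ?_
  congr 1
  rw [Finset.mem_powerset] at hS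
  rw [Finset.prod_attach A (fun j => if j ∈ S then X j ω else 1), ← Finset.prod_filter,
    Finset.filter_mem_eq_inter, Finset.inter_eq_right.mpr hS]

variable {X : Fin n → Ω → ℝ}

lemma indep_aux (hXmeas : ∀ i, Measurable (X i))
    (hXindep : iIndepFun X μ)
    {a : Fin n} {A : Finset (Fin n)} (ha : a ∉ A)
    {φ : ℝ → ℝ} (hφ : Measurable φ)
    {Φ : ({ x // x ∈ A } → ℝ) → ℝ} (hΦ : Measurable Φ) :
    IndepFun (fun ω => φ (X a ω)) (fun ω => Φ (fun i : { x // x ∈ A } => X i ω)) μ := by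
  have hd : Disjoint ({a} : Finset (Fin n)) A := by
    simp [Finset.disjoint_left, ha]
  have h := hXindep.indepFun_finset {a} A hd hXmeas
  exact h.comp (φ := fun v : { x // x ∈ ({a} : Finset (Fin n)) } → ℝ =>
      φ (v ⟨a, Finset.mem_singleton_self a⟩))
    (hφ.comp (measurable_pi_apply _)) hΦ

lemma memLp_prod (hXmeas : ∀ i, Measurable (X i))
    (hXindep : iIndepFun X μ)
    (hXL4 : ∀ i, MemLp (X i) 4 μ) (S : Finset (Fin n)) :
    MemLp (fun ω => ∏ i ∈ S, X i ω) 4 μ := by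
  classical
  induction S using Finset.induction_on with
  | empty => simpa using memLp_const (1:ℝ)
  | insert _ _ ha =>
    rename_i a S ih
    have hind : IndepFun (X a) (fun ω => ∏ i ∈ S, X i ω) μ := by
      have h := (hXindep.indepFun_finset_prod_of_notMem hXmeas ha).symm
      have he : (∏ j ∈ S, X j) = (fun ω => ∏ i ∈ S, X i ω) := funext fun ω => by
        simp [Finset.prod_apply]
      rwa [he] at h
    have h := memLp4_mul_indep hind (hXL4 a) ih
    refine h.ae_eq (Filter.Eventually.of_forall fun ω => ?_)
    simp only [Finset.prod_insert ha]

/-- the multilinear polynomial applied to `X`, as a function on `Ω` -/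
def fml (X : Fin n → Ω → ℝ) (A : Finset (Fin n)) (c : Finset (Fin n) → ℝ) : Ω → ℝ :=
  fun ω => polyFn A c (fun i : { x // x ∈ A } => X i ω)

lemma fml_eq (A : Finset (Fin n)) (c : Finset (Fin n) → ℝ) (ω : Ω) :
    fml X A c ω = ∑ S ∈ A.powerset, c S * ∏ i ∈ S, X i ω :=
  polyFn_apply A c ω

lemma fml_memLp (hXmeas : ∀ i, Measurable (X i))
    (hXindep : iIndepFun X μ)
    (hXL4 : ∀ i, MemLp (X i) 4 μ) (A : Finset (Fin n)) (c : Finset (Fin n) → ℝ) :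
    MemLp (fml X A c) 4 μ := by
  have h : MemLp (fun ω => ∑ S ∈ A.powerset, c S * ∏ i ∈ S, X i ω) 4 μ :=
    memLp_finset_sum _ fun S _ => (memLp_prod hXmeas hXindep hXL4 S).const_mul (c S)
  exact h.ae_eq (Filter.Eventually.of_forall fun ω => (fml_eq A c ω).symm)

lemma split_int (hXmeas : ∀ i, Measurable (X i))
    (hXindep : iIndepFun X μ)
    {a : Fin n} {A : Finset (Fin n)} (ha : a ∉ A) (p : ℕ)
    {Φ : ({ x // x ∈ A } → ℝ) → ℝ} (hΦ : Measurable Φ) :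
    ∫ ω, (X a ω)^p * Φ (fun i : { x // x ∈ A } => X i ω) ∂μ
      = (∫ ω, (X a ω)^p ∂μ) * ∫ ω, Φ (fun i : { x // x ∈ A } => X i ω) ∂μ := by
  have h := (indep_aux hXmeas hXindep ha (measurable_id.pow_const p) hΦ).integral_mul_eq_mul_integral
    (((hXmeas a).pow_const p).aestronglyMeasurable)
    ((hΦ.comp (measurable_pi_lambda _ fun i => hXmeas i)).aestronglyMeasurable)
  simpa [Pi.mul_apply] using h

lemma key (hXmeas : ∀ i, Measurable (X i))
    (hXindep : iIndepFun X μ)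
    (hXL4 : ∀ i, MemLp (X i) 4 μ)
    (hXmean : ∀ i, (∫ ω, X i ω ∂μ) = 0)
    (hX3 : ∀ i, (∫ ω, (X i ω) ^ 3 ∂μ) = 0)
    (hX4 : ∀ i, (∫ ω, (X i ω) ^ 4 ∂μ) ≤ 9 * (∫ ω, (X i ω) ^ 2 ∂μ) ^ 2)
    (A : Finset (Fin n)) :
    ∀ (k : ℕ) (c : Finset (Fin n) → ℝ),
      (∀ S, S ⊆ A → k < S.card → c S = 0) →
      (∫ ω, (fml X A c ω)^4 ∂μ) ≤ 9^k * (∫ ω, (fml X A c ω)^2 ∂μ)^2 := by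
  classical
  induction A using Finset.induction_on with
  | empty =>
    intro k c _
    have h : ∀ ω, fml X ∅ c ω = c ∅ := fun ω => by simp [fml_eq]
    have h4 : (∫ ω, (fml X ∅ c ω)^4 ∂μ) = (c ∅)^4 := by simp only [h]; simp
    have h2 : (∫ ω, (fml X ∅ c ω)^2 ∂μ) = (c ∅)^2 := by simp only [h]; simp
    rw [h4, h2]
    have h9 : (1:ℝ) ≤ 9^k := one_le_pow₀ (by norm_num)
    nlinarith [sq_nonneg ((c ∅)^2)]
  | insert _ _ ha =>
    rename_i a A ih
    intro k c hdeg
    set d : Finset (Fin n) → ℝ := fun S => c (insert a S) with hdd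
    have hFrw : ∀ ω, fml X (insert a A) c ω = X a ω * fml X A d ω + fml X A c ω := by
      intro ω
      rw [fml_eq, fml_eq, fml_eq, Finset.powerset_insert]
      have hdisj : Disjoint A.powerset (Finset.image (insert a) A.powerset) := by
        rw [Finset.disjoint_right]
        intro S hS hS'
        obtain ⟨t, ht, rfl⟩ := Finset.mem_image.mp hS
        exact ha (Finset.mem_powerset.mp hS' (Finset.mem_insert_self a t))
      rw [Finset.sum_union hdisj]
      have hinj : ∀ x ∈ A.powerset, ∀ y ∈ A.powerset, insert a x = insert a y → x = y := by
        intro x hx y hy hxy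
        have hax : a ∉ x := fun h => ha (Finset.mem_powerset.mp hx h)
        have hay : a ∉ y := fun h => ha (Finset.mem_powerset.mp hy h)
        rw [← Finset.erase_insert hax, hxy, Finset.erase_insert hay]
      rw [Finset.sum_image hinj, Finset.mul_sum]
      have hterm : ∀ S ∈ A.powerset, c (insert a S) * ∏ i ∈ insert a S, X i ω
          = X a ω * (d S * ∏ i ∈ S, X i ω) := by
        intro S hS
        have haS : a ∉ S := fun h => ha (Finset.mem_powerset.mp hS h)
        rw [Finset.prod_insert haS, hdd]; ring
      rw [Finset.sum_congr rfl hterm]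
      ring
    rcases k with _ | k'
    · -- degree 0 : the D part vanishes
      have hD0 : ∀ ω, fml X A d ω = 0 := by
        intro ω
        rw [fml_eq]
        refine Finset.sum_eq_zero fun S hS => ?_
        have h1 : insert a S ⊆ insert a A :=
          Finset.insert_subset_insert a (Finset.mem_powerset.mp hS)
        have h2 : 0 < (insert a S).card :=
          Finset.card_pos.mpr ⟨a, Finset.mem_insert_self a S⟩
        have : d S = 0 := hdeg _ h1 h2
        rw [this, zero_mul]
      have hFE : ∀ ω, fml X (insert a A) c ω = fml X A c ω := fun ω => by
        rw [hFrw ω, hD0 ω]; ring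
      have e4 : ∫ ω, (fml X (insert a A) c ω)^4 ∂μ = ∫ ω, (fml X A c ω)^4 ∂μ :=
        integral_congr_ae (Filter.Eventually.of_forall fun ω => by beta_reduce; rw [hFE ω])
      have e2 : ∫ ω, (fml X (insert a A) c ω)^2 ∂μ = ∫ ω, (fml X A c ω)^2 ∂μ :=
        integral_congr_ae (Filter.Eventually.of_forall fun ω => by beta_reduce; rw [hFE ω])
      rw [e4, e2]
      exact ih 0 c fun S hS h => hdeg S (hS.trans (Finset.subset_insert a A)) h
    · -- inductive step
      have hmXa : MemLp (X a) 4 μ := hXL4 a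
      have hmD : MemLp (fml X A d) 4 μ := fml_memLp hXmeas hXindep hXL4 A d
      have hmE : MemLp (fml X A c) 4 μ := fml_memLp hXmeas hXindep hXL4 A c
      have hmXa2 : MemLp (X a) 2 μ := hmXa.mono_exponent h24
      have mD : Measurable (polyFn A d) := polyFn_meas A d
      have mE : Measurable (polyFn A c) := polyFn_meas A c
      -- basic integrability
      have hiXa4 : Integrable (fun ω => (X a ω)^4) μ := intpow4 hmXa
      have hiXa3 : Integrable (fun ω => (X a ω)^3) μ := intpow3 hmXa
      have hiXa2 : Integrable (fun ω => (X a ω)^2) μ := intpow2 hmXa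
      have hiXa1 : Integrable (fun ω => (X a ω)^1) μ :=
        ((hmXa.mono_exponent h14).integrable le_rfl).congr
          (Filter.Eventually.of_forall fun ω => (pow_one _).symm)
      have hiD4 : Integrable (fun ω => (fml X A d ω)^4) μ := intpow4 hmD
      have hiE4 : Integrable (fun ω => (fml X A c ω)^4) μ := intpow4 hmE
      have hiD2 : Integrable (fun ω => (fml X A d ω)^2) μ := intpow2 hmD
      have hiE2 : Integrable (fun ω => (fml X A c ω)^2) μ := intpow2 hmE
      have hiD3E : Integrable (fun ω => (fml X A d ω)^3 * fml X A c ω) μ :=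
        (int_mul4 hmD hmD hmD hmE).congr (Filter.Eventually.of_forall fun ω => by ring)
      have hiD2E2 : Integrable (fun ω => (fml X A d ω)^2 * (fml X A c ω)^2) μ :=
        (int_mul4 hmD hmD hmE hmE).congr (Filter.Eventually.of_forall fun ω => by ring)
      have hiDE3 : Integrable (fun ω => fml X A d ω * (fml X A c ω)^3) μ :=
        (int_mul4 hmD hmE hmE hmE).congr (Filter.Eventually.of_forall fun ω => by ring)
      have hiDE : Integrable (fun ω => fml X A d ω * fml X A c ω) μ :=
        int_mul2 (hmD.mono_exponent h24) (hmE.mono_exponent h24)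
      -- independence-based integrability
      have j1 : Integrable (fun ω => (X a ω)^4 * (fml X A d ω)^4) μ :=
        (indep_aux hXmeas hXindep ha (measurable_id.pow_const 4)
          (mD.pow_const 4)).integrable_mul hiXa4 hiD4
      have j2 : Integrable (fun ω => (X a ω)^3 * ((fml X A d ω)^3 * fml X A c ω)) μ :=
        (indep_aux hXmeas hXindep ha (measurable_id.pow_const 3)
          ((mD.pow_const 3).mul mE)).integrable_mul hiXa3 hiD3E
      have j3 : Integrable (fun ω => (X a ω)^2 * ((fml X A d ω)^2 * (fml X A c ω)^2)) μ :=
        (indep_aux hXmeas hXindep ha (measurable_id.pow_const 2)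
          ((mD.pow_const 2).mul (mE.pow_const 2))).integrable_mul hiXa2 hiD2E2
      have j4 : Integrable (fun ω => (X a ω)^1 * (fml X A d ω * (fml X A c ω)^3)) μ :=
        (indep_aux hXmeas hXindep ha (measurable_id.pow_const 1)
          (mD.mul (mE.pow_const 3))).integrable_mul hiXa1 hiDE3
      have j5 : Integrable (fun ω => (X a ω)^2 * (fml X A d ω)^2) μ :=
        (indep_aux hXmeas hXindep ha (measurable_id.pow_const 2)
          (mD.pow_const 2)).integrable_mul hiXa2 hiD2
      have j6 : Integrable (fun ω => (X a ω)^1 * (fml X A d ω * fml X A c ω)) μ :=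
        (indep_aux hXmeas hXindep ha (measurable_id.pow_const 1)
          (mD.mul mE)).integrable_mul hiXa1 hiDE
      -- splits
      have s1 : ∫ ω, (X a ω)^4 * (fml X A d ω)^4 ∂μ
          = (∫ ω, (X a ω)^4 ∂μ) * ∫ ω, (fml X A d ω)^4 ∂μ :=
        split_int hXmeas hXindep ha 4 (Φ := fun v => (polyFn A d v)^4) (mD.pow_const 4)
      have s2 : ∫ ω, (X a ω)^3 * ((fml X A d ω)^3 * fml X A c ω) ∂μ
          = (∫ ω, (X a ω)^3 ∂μ) * ∫ ω, (fml X A d ω)^3 * fml X A c ω ∂μ :=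
        split_int hXmeas hXindep ha 3 (Φ := fun v => (polyFn A d v)^3 * polyFn A c v)
          ((mD.pow_const 3).mul mE)
      have s3 : ∫ ω, (X a ω)^2 * ((fml X A d ω)^2 * (fml X A c ω)^2) ∂μ
          = (∫ ω, (X a ω)^2 ∂μ) * ∫ ω, (fml X A d ω)^2 * (fml X A c ω)^2 ∂μ :=
        split_int hXmeas hXindep ha 2 (Φ := fun v => (polyFn A d v)^2 * (polyFn A c v)^2)
          ((mD.pow_const 2).mul (mE.pow_const 2))
      have s4 : ∫ ω, (X a ω)^1 * (fml X A d ω * (fml X A c ω)^3) ∂μ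
          = (∫ ω, (X a ω)^1 ∂μ) * ∫ ω, fml X A d ω * (fml X A c ω)^3 ∂μ :=
        split_int hXmeas hXindep ha 1 (Φ := fun v => polyFn A d v * (polyFn A c v)^3)
          (mD.mul (mE.pow_const 3))
      have s5 : ∫ ω, (X a ω)^2 * (fml X A d ω)^2 ∂μ
          = (∫ ω, (X a ω)^2 ∂μ) * ∫ ω, (fml X A d ω)^2 ∂μ :=
        split_int hXmeas hXindep ha 2 (Φ := fun v => (polyFn A d v)^2) (mD.pow_const 2)
      have s6 : ∫ ω, (X a ω)^1 * (fml X A d ω * fml X A c ω) ∂μ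
          = (∫ ω, (X a ω)^1 ∂μ) * ∫ ω, fml X A d ω * fml X A c ω ∂μ :=
        split_int hXmeas hXindep ha 1 (Φ := fun v => polyFn A d v * polyFn A c v)
          (mD.mul mE)
      have hXa1zero : (∫ ω, (X a ω)^1 ∂μ) = 0 := by
        simp only [pow_one]; exact hXmean a
      -- the two moment identities
      have hI4 : ∫ ω, (fml X (insert a A) c ω)^4 ∂μ
          = (∫ ω, (X a ω)^4 ∂μ) * (∫ ω, (fml X A d ω)^4 ∂μ)
            + 6 * ((∫ ω, (X a ω)^2 ∂μ) * ∫ ω, (fml X A d ω)^2 * (fml X A c ω)^2 ∂μ)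
            + ∫ ω, (fml X A c ω)^4 ∂μ := by
        have e4 : ∫ ω, (fml X (insert a A) c ω)^4 ∂μ
            = ∫ ω, ((X a ω)^4 * (fml X A d ω)^4
              + (4 * ((X a ω)^3 * ((fml X A d ω)^3 * fml X A c ω))
              + (6 * ((X a ω)^2 * ((fml X A d ω)^2 * (fml X A c ω)^2))
              + (4 * ((X a ω)^1 * (fml X A d ω * (fml X A c ω)^3))
              + (fml X A c ω)^4)))) ∂μ :=
          integral_congr_ae (Filter.Eventually.of_forall fun ω => by beta_reduce; rw [hFrw ω]; ring)
        have i5 : Integrable (fun ω => 4 * ((X a ω)^1 * (fml X A d ω * (fml X A c ω)^3))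
            + (fml X A c ω)^4) μ := (j4.const_mul 4).add hiE4
        have i6 : Integrable (fun ω => 6 * ((X a ω)^2 * ((fml X A d ω)^2 * (fml X A c ω)^2))
            + (4 * ((X a ω)^1 * (fml X A d ω * (fml X A c ω)^3))
            + (fml X A c ω)^4)) μ := (j3.const_mul 6).add i5
        have i7 : Integrable (fun ω => 4 * ((X a ω)^3 * ((fml X A d ω)^3 * fml X A c ω))
            + (6 * ((X a ω)^2 * ((fml X A d ω)^2 * (fml X A c ω)^2))
            + (4 * ((X a ω)^1 * (fml X A d ω * (fml X A c ω)^3))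
            + (fml X A c ω)^4))) μ := (j2.const_mul 4).add i6
        rw [e4,
          integral_add j1 i7,
          integral_add (j2.const_mul 4) i6,
          integral_add (j3.const_mul 6) i5,
          integral_add (j4.const_mul 4) hiE4,
          integral_const_mul, integral_const_mul, integral_const_mul,
          s1, s2, s3, s4, hX3 a, hXa1zero]
        ring
      have hI2 : ∫ ω, (fml X (insert a A) c ω)^2 ∂μ
          = (∫ ω, (X a ω)^2 ∂μ) * (∫ ω, (fml X A d ω)^2 ∂μ)
            + ∫ ω, (fml X A c ω)^2 ∂μ := by
        have e2 : ∫ ω, (fml X (insert a A) c ω)^2 ∂μ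
            = ∫ ω, ((X a ω)^2 * (fml X A d ω)^2
              + (2 * ((X a ω)^1 * (fml X A d ω * fml X A c ω))
              + (fml X A c ω)^2)) ∂μ :=
          integral_congr_ae (Filter.Eventually.of_forall fun ω => by beta_reduce; rw [hFrw ω]; ring)
        have i8 : Integrable (fun ω => 2 * ((X a ω)^1 * (fml X A d ω * fml X A c ω))
            + (fml X A c ω)^2) μ := (j6.const_mul 2).add hiE2
        rw [e2,
          integral_add j5 i8,
          integral_add (j6.const_mul 2) hiE2,
          integral_const_mul, s5, s6, hXa1zero]
        ring
      -- induction hypotheses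
      have hIH_D : ∫ ω, (fml X A d ω)^4 ∂μ ≤ 9^k' * (∫ ω, (fml X A d ω)^2 ∂μ)^2 := by
        refine ih k' d fun S hS hcard => ?_
        refine hdeg (insert a S) (Finset.insert_subset_insert a hS) ?_
        rw [Finset.card_insert_of_notMem (fun h => ha (hS h))]
        omega
      have hIH_E : ∫ ω, (fml X A c ω)^4 ∂μ ≤ 9^(k'+1) * (∫ ω, (fml X A c ω)^2 ∂μ)^2 :=
        ih (k'+1) c fun S hS h => hdeg S (hS.trans (Finset.subset_insert a A)) h
      -- nonnegativity
      have pos_sa : 0 ≤ ∫ ω, (X a ω)^2 ∂μ := integral_nonneg fun ω => sq_nonneg _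
      have pos_D2 : 0 ≤ ∫ ω, (fml X A d ω)^2 ∂μ := integral_nonneg fun ω => sq_nonneg _
      have pos_E2 : 0 ≤ ∫ ω, (fml X A c ω)^2 ∂μ := integral_nonneg fun ω => sq_nonneg _
      have pos_D4 : 0 ≤ ∫ ω, (fml X A d ω)^4 ∂μ := integral_nonneg fun ω => by positivity
      have pos_E4 : 0 ≤ ∫ ω, (fml X A c ω)^4 ∂μ := integral_nonneg fun ω => by positivity
      have pos_m4 : 0 ≤ ∫ ω, (X a ω)^4 ∂μ := integral_nonneg fun ω => by positivity
      -- Cauchy–Schwarz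
      have h93 : ∀ m : ℕ, (9:ℝ)^m = (3^m)^2 := fun m => by
        rw [show (9:ℝ) = 3^2 by norm_num, ← pow_mul, ← pow_mul, Nat.mul_comm]
      have hconj : Real.HolderConjugate 2 2 := Real.holderConjugate_iff.mpr ⟨one_lt_two, by norm_num⟩
      have hmD2sq : MemLp (fun ω => (fml X A d ω)^2) (ENNReal.ofReal 2) μ := by
        rw [show ENNReal.ofReal 2 = 2 by simp [ENNReal.ofReal_ofNat]]
        exact (memLp2_mul hmD hmD).ae_eq (Filter.Eventually.of_forall fun ω => by ring)
      have hmE2sq : MemLp (fun ω => (fml X A c ω)^2) (ENNReal.ofReal 2) μ := by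
        rw [show ENNReal.ofReal 2 = 2 by simp [ENNReal.ofReal_ofNat]]
        exact (memLp2_mul hmE hmE).ae_eq (Filter.Eventually.of_forall fun ω => by ring)
      have hCS0 := integral_mul_le_Lp_mul_Lq_of_nonneg hconj
        (Filter.Eventually.of_forall fun ω => sq_nonneg (fml X A d ω))
        (Filter.Eventually.of_forall fun ω => sq_nonneg (fml X A c ω)) hmD2sq hmE2sq
      have c1 : (∫ a, ((fml X A d a)^2) ^ (2:ℝ) ∂μ) = ∫ ω, (fml X A d ω)^4 ∂μ :=
        integral_congr_ae (Filter.Eventually.of_forall fun ω => by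
          beta_reduce; rw [show (2:ℝ) = ((2:ℕ):ℝ) by norm_num, Real.rpow_natCast]; ring)
      have c2 : (∫ a, ((fml X A c a)^2) ^ (2:ℝ) ∂μ) = ∫ ω, (fml X A c ω)^4 ∂μ :=
        integral_congr_ae (Filter.Eventually.of_forall fun ω => by
          beta_reduce; rw [show (2:ℝ) = ((2:ℕ):ℝ) by norm_num, Real.rpow_natCast]; ring)
      rw [c1, c2] at hCS0
      -- bound the square roots
      have hsq : ∀ {x y : ℝ}, 0 ≤ y → x ≤ y^2 → x^((1:ℝ)/2) ≤ y := by
        intro x y hy hxy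
        rw [← Real.sqrt_eq_rpow]
        calc Real.sqrt x ≤ Real.sqrt (y^2) := Real.sqrt_le_sqrt hxy
          _ = y := Real.sqrt_sq hy
      have b1 : (∫ ω, (fml X A d ω)^4 ∂μ)^((1:ℝ)/2) ≤ 3^k' * ∫ ω, (fml X A d ω)^2 ∂μ := by
        refine hsq (by positivity) ?_
        rw [mul_pow, ← h93 k']
        exact hIH_D
      have b2 : (∫ ω, (fml X A c ω)^4 ∂μ)^((1:ℝ)/2)
          ≤ 3^(k'+1) * ∫ ω, (fml X A c ω)^2 ∂μ := by
        refine hsq (by positivity) ?_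
        rw [mul_pow, ← h93 (k'+1)]
        exact hIH_E
      have hDE_bound : ∫ ω, (fml X A d ω)^2 * (fml X A c ω)^2 ∂μ
          ≤ 3 * 9^k' * ((∫ ω, (fml X A d ω)^2 ∂μ) * ∫ ω, (fml X A c ω)^2 ∂μ) := by
        calc ∫ ω, (fml X A d ω)^2 * (fml X A c ω)^2 ∂μ
            ≤ (∫ ω, (fml X A d ω)^4 ∂μ)^((1:ℝ)/2) * (∫ ω, (fml X A c ω)^4 ∂μ)^((1:ℝ)/2) :=
              hCS0
          _ ≤ (3^k' * ∫ ω, (fml X A d ω)^2 ∂μ) * (3^(k'+1) * ∫ ω, (fml X A c ω)^2 ∂μ) := by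
              refine mul_le_mul b1 b2 (Real.rpow_nonneg pos_E4 _) ?_
              positivity
          _ = 3 * 9^k' * ((∫ ω, (fml X A d ω)^2 ∂μ) * ∫ ω, (fml X A c ω)^2 ∂μ) := by
              rw [pow_succ, h93 k']; ring
      -- conclude
      rw [hI4, hI2]
      have hterm1 : (∫ ω, (X a ω)^4 ∂μ) * (∫ ω, (fml X A d ω)^4 ∂μ)
          ≤ (9 * (∫ ω, (X a ω)^2 ∂μ)^2) * (9^k' * (∫ ω, (fml X A d ω)^2 ∂μ)^2) :=
        mul_le_mul (hX4 a) hIH_D pos_D4 (by positivity)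
      have hterm2 : (∫ ω, (X a ω)^2 ∂μ) * (∫ ω, (fml X A d ω)^2 * (fml X A c ω)^2 ∂μ)
          ≤ (∫ ω, (X a ω)^2 ∂μ)
            * (3 * 9^k' * ((∫ ω, (fml X A d ω)^2 ∂μ) * ∫ ω, (fml X A c ω)^2 ∂μ)) :=
        mul_le_mul_of_nonneg_left hDE_bound pos_sa
      have h9succ : (9:ℝ)^(k'+1) = 9 * 9^k' := by rw [pow_succ]; ring
      nlinarith [hterm1, hterm2, hIH_E, pos_sa, pos_D2, pos_E2,
        mul_nonneg pos_sa pos_D2, mul_nonneg (mul_nonneg pos_sa pos_sa) (mul_nonneg pos_D2 pos_D2)]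
end MainSec

noncomputable def mlp {n : ℕ} (c : Finset (Fin n) → ℝ) (x : Fin n → ℝ) : ℝ :=
  ∑ S : Finset (Fin n), c S * ∏ i ∈ S, x i

/-- **Bonami Lemma.** If `X₁, …, Xₙ` are independent with `E[Xᵢ] = E[Xᵢ³] = 0` and
`E[Xᵢ⁴] ≤ 9 E[Xᵢ²]²`, and `f` is a multilinear polynomial of degree at most `k`, then
`E[f(X)⁴] ≤ 9^k E[f(X)²]²`. -/
theorem bonami_lemma {Ω : Type*} [MeasurableSpace Ω] {μ : Measure Ω}
    [IsProbabilityMeasure μ] {n k : ℕ}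
    (c : Finset (Fin n) → ℝ)
    (hdeg : ∀ S : Finset (Fin n), k < S.card → c S = 0)
    (X : Fin n → Ω → ℝ)
    (hXmeas : ∀ i, Measurable (X i))
    (hXindep : iIndepFun X μ)
    (hXL4 : ∀ i, MemLp (X i) 4 μ)
    (hXmean : ∀ i, (∫ ω, X i ω ∂μ) = 0)
    (hX3 : ∀ i, (∫ ω, (X i ω) ^ 3 ∂μ) = 0)
    (hX4 : ∀ i, (∫ ω, (X i ω) ^ 4 ∂μ) ≤ 9 * (∫ ω, (X i ω) ^ 2 ∂μ) ^ 2) :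
    (∫ ω, (mlp c (fun i => X i ω)) ^ 4 ∂μ)
      ≤ 9 ^ k * (∫ ω, (mlp c (fun i => X i ω)) ^ 2 ∂μ) ^ 2 := by
  have h : ∀ ω, mlp c (fun i => X i ω) = fml X Finset.univ c ω := by
    intro ω
    rw [fml_eq, Finset.powerset_univ]
    rfl
  simp only [h]
  exact key hXmeas hXindep hXL4 hXmean hX3 hX4 Finset.univ k c fun S _ h' => hdeg S h'
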